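/- Let E be a real Banach space, f : E → E continuous, y₀ ∈ E, h > 0, s ≥ 1. Let F : ℝ → ℝ → E → E, Φ : ℝ × ℝ → L(E, E) continuous, and σ : ℝ → E continuously differentiable with σ(0) = y₀, and set y(t) := F t 0 y₀. Define γ_j(σ) = ∫_0^1 P_j(τ) f(σ(τh)) dτ for j ≥ 0. Assume: (i) F t̄ t̄ η = η for all t̄ ∈ [0,h], η ∈ E; (ii) for every t̄ ∈ [0,h] and t ∈ [0, t̄], the joint map (ξ, η) ↦ F t̄ ξ η has at (t, σ(t)) the Fréchet derivative (δξ, δη) ↦ −Φ(t̄, t)(f(σ(t))) δξ + Φ(t̄, t)(δη); (iii) σ(ch) = y₀ + h Σ_{j=0}^{s−1} (∫_0^c P_j(x) dx) γ_j(σ) for all c ∈ [0,1]; (iv) the series Σ_{j=0}^∞ P_j(τ) γ_j(σ) converges uniformly on [0,1] to f(σ(τh)); (v) there exist κ > 0 and ρ > 1 with ‖γ_j(σ)‖ ≤ κ √(2j+1) ρ^{−j} for all j ≥ 0; (vi) ‖Φ(t₁, t₂)‖ ≤ ν for all t₁, t₂ ∈ [0, h]. Then for every c ∈ [0,1], ‖σ(ch)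 − y(ch)‖ ≤ c h ν κ Σ_{j=s}^∞ (2j+1) ρ^{−j}. -/

import Mathlib

/-!
Along the approximation, `t ↦ F (c h) t (σ t)` runs from `y (c h)` at `t = 0` to `σ (c h)` at
`t = c h`, and by the chain rule its derivative is `Φ (c h, t) (σ' t - f (σ t))` (nonlinear
variation of constants). Differentiating the defining identity of `σ` gives
`σ' t = Σ_{j<s} P_j(t/h) γ_j`, so the defect `σ' - f ∘ σ` is minus the tail `Σ_{j≥s}` of the
Legendre expansion of `f (σ (τ h))`; since `|P_j| ≤ √(2j+1)` on `[0,1]`, it is at most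
`κ Σ_{j≥s} (2j+1) ρ^{-j}`, and the mean value inequality concludes.

The bound `|P_j| ≤ √(2j+1)` comes from the Legendre equation
`(x² - x) P'' + (2x - 1) P' = j (j+1) P`: the energy `j (j+1) P² + x (1 - x) P'²` has derivative
`(2x - 1) P'²`, so on `[0,1]` it is maximal at an endpoint, where `P_j² = 2j+1`.
-/

/-- The shifted and scaled Legendre polynomial on `[0,1]`, via Rodrigues' formula:
`P_j(x) = (√(2j+1)/j!) (d/dx)^j [(x² - x)^j]`. -/
noncomputable def legendreP (j : ℕ) : ℝ → ℝ :=
  fun x => (Real.sqrt (2 * (j : ℝ) + 1) / (Nat.factorial j : ℝ)) *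
    iteratedDeriv j (fun y : ℝ => (y ^ 2 - y) ^ j) x

open Polynomial Filter Topology Finset

namespace Polynomial

theorem iteratedDeriv_eval (p : ℝ[X]) (k : ℕ) :
    iteratedDeriv k (fun x => p.eval x) = fun x => (derivative^[k] p).eval x := by
  induction k with
  | zero => simp
  | succ k ih =>
    funext x
    rw [iteratedDeriv_succ, ih, Function.iterate_succ_apply']
    exact Polynomial.deriv _

theorem sq_eval_le_max_of_legendre_ode {p : ℝ[X]} {l : ℝ} (hl : 0 < l)
    (hode : (X ^ 2 - X) * derivative (derivative p) + (2 * X - 1) * derivative p = C l * p)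
    {x : ℝ} (hx : x ∈ Set.Icc 0 1) : p.eval x ^ 2 ≤ max (p.eval 0 ^ 2) (p.eval 1 ^ 2) := by
  set g : ℝ → ℝ := fun t => l * p.eval t ^ 2 + (t - t ^ 2) * (derivative p).eval t ^ 2
  have hg : ∀ t, HasDerivAt g ((2 * t - 1) * (derivative p).eval t ^ 2) t := by
    intro t
    have hode_t := congrArg (eval t) hode
    simp only [eval_add, eval_mul, eval_sub, eval_pow, eval_X, eval_C, eval_ofNat,
      eval_one] at hode_t
    have := (((p.hasDerivAt t).fun_pow 2).const_mul l).fun_add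
      (((hasDerivAt_id' t).fun_sub (hasDerivAt_pow 2 t)).fun_mul
        (((derivative p).hasDerivAt t).fun_pow 2))
    refine this.congr_deriv ?_
    push_cast
    linear_combination (-2 * (derivative p).eval t) * hode_t
  have hcont : ContinuousOn g Set.univ :=
    continuous_iff_continuousAt.2 (fun t => (hg t).continuousAt) |>.continuousOn
  have hg_le : g x ≤ max (g 0) (g 1) := by
    rcases le_total x (1 / 2) with hx2 | hx2
    · refine le_max_of_le_left <| antitoneOn_of_hasDerivWithinAt_nonpos (convex_Icc 0 (1 / 2))
        (hcont.mono (Set.subset_univ _)) (fun t _ => (hg t).hasDerivWithinAt) (fun t ht => ?_)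
        ⟨le_rfl, by norm_num⟩ ⟨hx.1, hx2⟩ hx.1
      rw [interior_Icc] at ht
      exact mul_nonpos_of_nonpos_of_nonneg (by linarith [ht.2]) (sq_nonneg _)
    · refine le_max_of_le_right <| monotoneOn_of_hasDerivWithinAt_nonneg (convex_Icc (1 / 2) 1)
        (hcont.mono (Set.subset_univ _)) (fun t _ => (hg t).hasDerivWithinAt) (fun t ht => ?_)
        ⟨hx2, hx.2⟩ ⟨by norm_num, le_rfl⟩ hx.2
      rw [interior_Icc] at ht
      exact mul_nonneg (by linarith [ht.1]) (sq_nonneg _)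
  have hpx : l * p.eval x ^ 2 ≤ g x :=
    le_add_of_nonneg_right (mul_nonneg (by nlinarith [hx.1, hx.2]) (sq_nonneg _))
  have hg_ends : max (g 0) (g 1) = l * max (p.eval 0 ^ 2) (p.eval 1 ^ 2) := by
    simp only [g, mul_max_of_nonneg _ _ hl.le]
    norm_num
  exact le_of_mul_le_mul_left (hpx.trans (hg_le.trans hg_ends.le)) hl

variable {R : Type*} [CommRing R]

theorem X_sq_sub_X_mul_derivative_pow (n : ℕ) :
    (X ^ 2 - X) * derivative ((X ^ 2 - X : R[X]) ^ n) =
      C (n : R) * ((2 * X - 1) * (X ^ 2 - X) ^ n) := by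
  cases n with
  | zero => simp
  | succ n =>
    rw [derivative_pow_succ]
    simp only [derivative_sub, derivative_X_pow, derivative_X, Nat.cast_succ, map_add,
      map_natCast, map_one]
    ring

-- `(X² - X) u' = n (2X - 1) u` for `u = (X² - X)ⁿ`, differentiated `k + 1` times; at `k = n`
-- this is the Legendre equation for `derivative^[n] u`.
theorem X_sq_sub_X_mul_iterate_derivative_X_sq_sub_X_pow (n k : ℕ) :
    (X ^ 2 - X) * derivative^[k + 2] ((X ^ 2 - X : R[X]) ^ n)
      + C ((k : R) + 1 - n) * ((2 * X - 1) * derivative^[k + 1] ((X ^ 2 - X : R[X]) ^ n))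
      = C (((k : R) + 1) * (2 * n - k)) * derivative^[k] ((X ^ 2 - X : R[X]) ^ n) := by
  induction k with
  | zero =>
    have h := congrArg derivative (X_sq_sub_X_mul_derivative_pow (R := R) n)
    simp only [derivative_mul, derivative_sub, derivative_X_pow, derivative_X, derivative_C,
      derivative_ofNat, derivative_one] at h
    simp only [Function.iterate_succ_apply', Function.iterate_zero_apply, map_sub, map_add,
      map_mul, map_natCast, map_one, map_ofNat] at h ⊢
    push_cast at h ⊢
    linear_combination h
  | succ k ih =>
    have h := congrArg derivative ih
    simp only [derivative_mul, derivative_add, derivative_sub, derivative_X_pow, derivative_X,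
      derivative_C, derivative_ofNat, derivative_one,
      ← Function.iterate_succ_apply' derivative] at h
    simp only [map_sub, map_add, map_mul, map_natCast, map_one, map_ofNat] at h ⊢
    push_cast at h ⊢
    linear_combination h

theorem iterate_derivative_X_sq_sub_X_pow (n : ℕ) :
    derivative^[n] ((X ^ 2 - X : R[X]) ^ n)
      = C ((-1) ^ n * n.factorial : R) * (shiftedLegendre n).map (Int.castRingHom R) := by
  have h := congrArg (map (Int.castRingHom R)) (factorial_mul_shiftedLegendre_eq n)
  rw [Polynomial.map_mul, ← iterate_derivative_map] at h
  have : (X ^ 2 - X : R[X]) ^ n = C ((-1) ^ n) * (X ^ n * (1 - X) ^ n) := by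
    rw [← mul_pow, map_pow, map_neg, map_one, ← mul_pow]; ring
  rw [this, iterate_derivative_C_mul]
  simp only [Polynomial.map_mul, Polynomial.map_pow, Polynomial.map_sub, map_X, Polynomial.map_one,
    Polynomial.map_natCast] at h
  rw [← h, map_mul, mul_assoc, map_natCast]

@[simp] theorem shiftedLegendre_eval_zero (n : ℕ) : (shiftedLegendre n).eval 0 = 1 := by
  simp [← coeff_zero_eq_eval_zero, coeff_shiftedLegendre]

@[simp] theorem shiftedLegendre_eval_one (n : ℕ) : (shiftedLegendre n).eval 1 = (-1) ^ n := by
  simpa using shiftedLegendre_eval_symm n (1 : ℤ)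

theorem eval_zero_iterate_derivative_X_sq_sub_X_pow (n : ℕ) :
    (derivative^[n] ((X ^ 2 - X : R[X]) ^ n)).eval 0 = (-1) ^ n * n.factorial := by
  simp [iterate_derivative_X_sq_sub_X_pow, eval_map, eval₂_at_zero, coeff_shiftedLegendre]

theorem eval_one_iterate_derivative_X_sq_sub_X_pow (n : ℕ) :
    (derivative^[n] ((X ^ 2 - X : R[X]) ^ n)).eval 1 = n.factorial := by
  simp only [iterate_derivative_X_sq_sub_X_pow, eval_mul, eval_C, eval_map, eval₂_at_one,
    shiftedLegendre_eval_one]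
  rw [mul_right_comm, map_pow, map_neg, map_one, ← mul_pow]
  simp

theorem abs_eval_iterate_derivative_X_sq_sub_X_pow_le (n : ℕ) {x : ℝ} (hx : x ∈ Set.Icc 0 1) :
    |(derivative^[n] ((X ^ 2 - X : ℝ[X]) ^ n)).eval x| ≤ n.factorial := by
  rcases n.eq_zero_or_pos with rfl | hn
  · simp
  have hode : (X ^ 2 - X) * derivative (derivative (derivative^[n] ((X ^ 2 - X : ℝ[X]) ^ n)))
      + (2 * X - 1) * derivative (derivative^[n] ((X ^ 2 - X : ℝ[X]) ^ n))
      = C (((n : ℝ) + 1) * n) * derivative^[n] ((X ^ 2 - X : ℝ[X]) ^ n) := by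
    have := X_sq_sub_X_mul_iterate_derivative_X_sq_sub_X_pow (R := ℝ) n n
    simp only [Function.iterate_succ_apply', map_sub, map_add, map_mul, map_natCast, map_one,
      map_ofNat] at this ⊢
    linear_combination this
  have hsq := sq_eval_le_max_of_legendre_ode (by positivity) hode hx
  rw [eval_zero_iterate_derivative_X_sq_sub_X_pow, eval_one_iterate_derivative_X_sq_sub_X_pow,
    mul_pow, ← pow_mul, pow_mul', neg_one_sq, one_pow, one_mul, max_self] at hsq
  exact abs_le_of_sq_le_sq hsq (Nat.cast_nonneg _)

end Polynomial

theorem legendreP_eq_eval (j : ℕ) :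
    legendreP j = fun x => √(2 * (j : ℝ) + 1) / j.factorial *
      (derivative^[j] ((X ^ 2 - X : ℝ[X]) ^ j)).eval x := by
  have : (fun y : ℝ => (y ^ 2 - y) ^ j) = fun y => ((X ^ 2 - X : ℝ[X]) ^ j).eval y := by
    simp
  unfold legendreP
  rw [this, iteratedDeriv_eval]

theorem continuous_legendreP (j : ℕ) : Continuous (legendreP j) := by
  rw [legendreP_eq_eval]
  fun_prop

theorem abs_legendreP_le (j : ℕ) {x : ℝ} (hx : x ∈ Set.Icc 0 1) :
    |legendreP j x| ≤ √(2 * (j : ℝ) + 1) := by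
  rw [legendreP_eq_eval, abs_mul, abs_of_nonneg (by positivity), div_mul_eq_mul_div,
    div_le_iff₀ (by positivity)]
  exact mul_le_mul_of_nonneg_left (abs_eval_iterate_derivative_X_sq_sub_X_pow_le j hx)
    (Real.sqrt_nonneg _)

theorem summable_two_mul_add_one_div_pow {ρ : ℝ} (hρ : 1 < ρ) :
    Summable fun j : ℕ => (2 * (j : ℝ) + 1) / ρ ^ j := by
  have hr : ‖ρ⁻¹‖ < 1 := by
    rw [norm_inv, Real.norm_of_nonneg (by linarith)]
    exact inv_lt_one_of_one_lt₀ hρ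
  have h := ((summable_pow_mul_geometric_of_norm_lt_one 1 hr).mul_left 2).add
    (summable_geometric_of_norm_lt_one hr)
  refine h.congr fun j => ?_
  simp only [pow_one, inv_pow, div_eq_mul_inv]
  ring

theorem norm_sum_range_sub_le_tsum_of_tendsto {E : Type*} [SeminormedAddCommGroup E]
    {u : ℕ → E} {L : E} {b : ℕ → ℝ} (hu : Tendsto (fun n => ∑ j ∈ range n, u j) atTop (𝓝 L))
    (hb : Summable b) (hub : ∀ j, ‖u j‖ ≤ b j) (s : ℕ) :
    ‖∑ j ∈ range s, u j - L‖ ≤ ∑' j, b (s + j) := by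
  have htail : Summable fun j => b (s + j) := by
    simpa only [add_comm] using (summable_nat_add_iff s).mpr hb
  refine le_of_tendsto (tendsto_const_nhds.sub hu).norm ?_
  filter_upwards [eventually_ge_atTop s] with n hn
  calc ‖∑ j ∈ range s, u j - ∑ j ∈ range n, u j‖ = ‖∑ j ∈ Ico s n, u j‖ := by
        rw [norm_sub_rev, sum_Ico_eq_sub _ hn]
    _ ≤ ∑ j ∈ Ico s n, b j := norm_sum_le_of_le _ fun j _ => hub j
    _ = ∑ j ∈ range (n - s), b (s + j) := sum_Ico_eq_sum_range _ _ _
    _ ≤ ∑' j, b (s + j) :=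
        htail.sum_le_tsum _ fun j _ => (norm_nonneg _).trans (hub _)

section

variable {E : Type*} [NormedAddCommGroup E] [NormedSpace ℝ E]

theorem norm_sum_range_legendreP_smul_sub_le {γ : ℕ → E} {κ ρ τ : ℝ} {L : E} (hρ : 1 < ρ)
    (hγ : ∀ j : ℕ, ‖γ j‖ ≤ κ * √(2 * (j : ℝ) + 1) / ρ ^ j) (hτ : τ ∈ Set.Icc 0 1)
    (hL : Tendsto (fun n => ∑ j ∈ range n, legendreP j τ • γ j) atTop (𝓝 L)) (s : ℕ) :
    ‖∑ j ∈ range s, legendreP j τ • γ j - L‖ ≤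
      κ * ∑' j : ℕ, (2 * ((s : ℝ) + j) + 1) / ρ ^ (s + j) := by
  have hterm : ∀ j : ℕ, ‖legendreP j τ • γ j‖ ≤ κ * ((2 * (j : ℝ) + 1) / ρ ^ j) := by
    intro j
    calc ‖legendreP j τ • γ j‖ = |legendreP j τ| * ‖γ j‖ := by rw [norm_smul, Real.norm_eq_abs]
      _ ≤ √(2 * (j : ℝ) + 1) * (κ * √(2 * (j : ℝ) + 1) / ρ ^ j) :=
          mul_le_mul (abs_legendreP_le j hτ) (hγ j) (norm_nonneg _) (Real.sqrt_nonneg _)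
      _ = κ * ((2 * (j : ℝ) + 1) / ρ ^ j) := by
          rw [mul_div_assoc', mul_left_comm, Real.mul_self_sqrt (by positivity),
            mul_div_assoc]
  have := norm_sum_range_sub_le_tsum_of_tendsto hL
    ((summable_two_mul_add_one_div_pow hρ).mul_left κ) hterm s
  simpa only [tsum_mul_left, Nat.cast_add] using this

theorem hasDerivWithinAt_of_eq_add_smul_sum_integral {ι : Type*} {S : Finset ι}
    {p : ι → ℝ → ℝ} {γ : ι → E} {σ : ℝ → E} {y₀ : E} {h t : ℝ} (hh : 0 < h)
    (hp : ∀ j, Continuous (p j))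
    (hσ : ∀ c ∈ Set.Icc (0 : ℝ) 1,
      σ (c * h) = y₀ + h • ∑ j ∈ S, (∫ x in (0 : ℝ)..c, p j x) • γ j)
    (ht : t ∈ Set.Icc 0 h) :
    HasDerivWithinAt σ (∑ j ∈ S, p j (t / h) • γ j) (Set.Icc 0 h) t := by
  have hΨ : HasDerivAt (fun t => y₀ + h • ∑ j ∈ S, (∫ x in (0 : ℝ)..t / h, p j x) • γ j)
      (∑ j ∈ S, p j (t / h) • γ j) t := by
    have hsum := HasDerivAt.fun_sum (u := S) fun j _ =>
      (((hp j).integral_hasStrictDerivAt 0 (t / h)).hasDerivAt.comp t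
        ((hasDerivAt_id t).div_const h)).smul_const (γ j)
    refine ((hsum.fun_const_smul h).const_add y₀).congr_deriv ?_
    rw [smul_sum]
    refine sum_congr rfl fun j _ => ?_
    rw [smul_smul]
    field_simp
  have hσΨ : ∀ u ∈ Set.Icc 0 h,
      σ u = y₀ + h • ∑ j ∈ S, (∫ x in (0 : ℝ)..u / h, p j x) • γ j := by
    intro u hu
    simpa only [div_mul_cancel₀ u hh.ne'] using
      hσ (u / h) ⟨div_nonneg hu.1 hh.le, (div_le_one hh).2 hu.2⟩
  exact hΨ.hasDerivWithinAt.congr hσΨ (hσΨ t ht)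

theorem norm_sub_le_of_hasFDerivAt_of_norm_defect_le {E' : Type*} [NormedAddCommGroup E']
    [NormedSpace ℝ E'] {G : ℝ → E → E'} {A : ℝ → E →L[ℝ] E'}
    {x x' v : ℝ → E} {a b C : ℝ} (hab : a ≤ b)
    (hx : ∀ t ∈ Set.Icc a b, HasDerivWithinAt x (x' t) (Set.Icc a b) t)
    (hG : ∀ t ∈ Set.Icc a b, HasFDerivAt (fun p : ℝ × E => G p.1 p.2)
      ((A t).comp (ContinuousLinearMap.snd ℝ ℝ E) -
        (ContinuousLinearMap.fst ℝ ℝ E).smulRight (A t (v t))) (t, x t))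
    (hC : ∀ t ∈ Set.Icc a b, ‖A t (x' t - v t)‖ ≤ C) :
    ‖G b (x b) - G a (x a)‖ ≤ C * (b - a) := by
  have hderiv : ∀ t ∈ Set.Icc a b,
      HasDerivWithinAt (fun t => G t (x t)) (A t (x' t - v t)) (Set.Icc a b) t := by
    intro t ht
    refine ((hG t ht).comp_hasDerivWithinAt t
      ((hasDerivWithinAt_id t _).prodMk (hx t ht))).congr_deriv ?_
    simp [map_sub]
  exact (convex_Icc a b).norm_image_sub_le_of_norm_hasDerivWithin_le hderiv hC
    ⟨le_rfl, hab⟩ ⟨hab, le_rfl⟩ |>.trans_eq (by rw [Real.norm_of_nonneg (sub_nonneg.2 hab)])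

end

theorem shbvm_uniform_error_bound_general
    {E : Type*} [NormedAddCommGroup E] [NormedSpace ℝ E]
    (f : E → E) (y₀ : E) (h : ℝ) (hh : 0 < h) (s : ℕ)
    (F : ℝ → ℝ → E → E) (Φ : ℝ × ℝ → E →L[ℝ] E)
    (σ : ℝ → E) (hσ0 : σ 0 = y₀)
    (y : ℝ → E) (hy : ∀ t, y t = F t 0 y₀)
    (γ : ℕ → E)
    (hFid : ∀ tb ∈ Set.Icc (0:ℝ) h, ∀ η : E, F tb tb η = η)
    (hFderiv : ∀ tb ∈ Set.Icc (0:ℝ) h, ∀ t ∈ Set.Icc (0:ℝ) tb,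
      HasFDerivAt (fun p : ℝ × E => F tb p.1 p.2)
        ((Φ (tb, t)).comp (ContinuousLinearMap.snd ℝ ℝ E) -
          (ContinuousLinearMap.fst ℝ ℝ E).smulRight (Φ (tb, t) (f (σ t))))
        (t, σ t))
    (hσeq : ∀ c ∈ Set.Icc (0:ℝ) 1,
      σ (c * h) = y₀ + h • ∑ j ∈ Finset.range s, (∫ x in (0:ℝ)..c, legendreP j x) • γ j)
    (hunif : TendstoUniformlyOn
      (fun n : ℕ => fun τ : ℝ => ∑ j ∈ Finset.range n, legendreP j τ • γ j)
      (fun τ : ℝ => f (σ (τ * h))) Filter.atTop (Set.Icc (0:ℝ) 1))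
    (κ ρ : ℝ) (hρ : 1 < ρ)
    (hγbound : ∀ j : ℕ, ‖γ j‖ ≤ κ * Real.sqrt (2 * (j : ℝ) + 1) / ρ ^ j)
    (ν : ℝ) (hν : ∀ t₁ ∈ Set.Icc (0:ℝ) h, ∀ t₂ ∈ Set.Icc (0:ℝ) h, ‖Φ (t₁, t₂)‖ ≤ ν) :
    ∀ c ∈ Set.Icc (0:ℝ) 1,
      ‖σ (c * h) - y (c * h)‖ ≤
        c * h * ν * κ * ∑' j : ℕ, (2 * ((s : ℝ) + j) + 1) / ρ ^ (s + j) := by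
  intro c ⟨hc0, hc1⟩
  set T := ∑' j : ℕ, (2 * ((s : ℝ) + j) + 1) / ρ ^ (s + j)
  have hch : c * h ∈ Set.Icc 0 h := ⟨by positivity, mul_le_of_le_one_left hh.le hc1⟩
  have hsub : Set.Icc 0 (c * h) ⊆ Set.Icc 0 h := Set.Icc_subset_Icc_right hch.2
  have hν0 : 0 ≤ ν := (norm_nonneg _).trans (hν 0 ⟨le_rfl, hh.le⟩ 0 ⟨le_rfl, hh.le⟩)
  have hdefect : ∀ t ∈ Set.Icc 0 (c * h),
      ‖Φ (c * h, t) (∑ j ∈ range s, legendreP j (t / h) • γ j - f (σ t))‖ ≤ ν * (κ * T) := by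
    intro t ht
    have hτ : t / h ∈ Set.Icc 0 1 :=
      ⟨div_nonneg ht.1 hh.le, (div_le_one hh).2 (hsub ht).2⟩
    have := norm_sum_range_legendreP_smul_sub_le hρ hγbound hτ (hunif.tendsto_at hτ) s
    rw [div_mul_cancel₀ t hh.ne'] at this
    exact (Φ (c * h, t)).le_opNorm _ |>.trans
      (mul_le_mul (hν _ hch _ (hsub ht)) this (norm_nonneg _) hν0)
  have := norm_sub_le_of_hasFDerivAt_of_norm_defect_le hch.1
    (fun t ht => (hasDerivWithinAt_of_eq_add_smul_sum_integral hh continuous_legendreP hσeq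
      (hsub ht)).mono hsub)
    (fun t ht => hFderiv _ hch t ht) hdefect
  rw [hFid _ hch, hσ0, ← hy, sub_zero] at this
  exact this.trans_eq (by ring)

/-- First statement of Theorem 2.6 (uniform accuracy of the polynomial approximation `σ`
on `[0, h]`): under the perturbation hypotheses on the solution map `F` and the
variational propagator `Φ`, if `σ` is the degree-`s` polynomial approximation obtained by
truncating the Legendre expansion of the vector field, whose Fourier coefficients satisfy
`‖γ_j(σ)‖ ≤ κ √(2j+1) ρ^{-j}`, and `‖Φ‖ ≤ ν` on `[0,h]²`, then for every `c ∈ [0,1]`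
`‖σ(ch) - y(ch)‖ ≤ c h ν κ Σ_{j=s}^∞ (2j+1) ρ^{-j}`. -/
theorem shbvm_uniform_error_bound
    {E : Type*} [NormedAddCommGroup E] [NormedSpace ℝ E] [CompleteSpace E]
    (f : E → E) (hf : Continuous f) (y₀ : E) (h : ℝ) (hh : 0 < h) (s : ℕ) (hs : 1 ≤ s)
    (F : ℝ → ℝ → E → E) (Φ : ℝ × ℝ → E →L[ℝ] E) (hΦ : Continuous Φ)
    (σ : ℝ → E) (hσ : ContDiff ℝ 1 σ) (hσ0 : σ 0 = y₀)
    (y : ℝ → E) (hy : ∀ t, y t = F t 0 y₀)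
    (γ : ℕ → E) (hγ : ∀ j : ℕ, γ j = ∫ τ in (0:ℝ)..1, legendreP j τ • f (σ (τ * h)))
    (hFid : ∀ tb ∈ Set.Icc (0:ℝ) h, ∀ η : E, F tb tb η = η)
    (hFderiv : ∀ tb ∈ Set.Icc (0:ℝ) h, ∀ t ∈ Set.Icc (0:ℝ) tb,
      HasFDerivAt (fun p : ℝ × E => F tb p.1 p.2)
        ((Φ (tb, t)).comp (ContinuousLinearMap.snd ℝ ℝ E) -
          (ContinuousLinearMap.fst ℝ ℝ E).smulRight (Φ (tb, t) (f (σ t))))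
        (t, σ t))
    (hσeq : ∀ c ∈ Set.Icc (0:ℝ) 1,
      σ (c * h) = y₀ + h • ∑ j ∈ Finset.range s, (∫ x in (0:ℝ)..c, legendreP j x) • γ j)
    (hunif : TendstoUniformlyOn
      (fun n : ℕ => fun τ : ℝ => ∑ j ∈ Finset.range n, legendreP j τ • γ j)
      (fun τ : ℝ => f (σ (τ * h))) Filter.atTop (Set.Icc (0:ℝ) 1))
    (κ ρ : ℝ) (hκ : 0 < κ) (hρ : 1 < ρ)
    (hγbound : ∀ j : ℕ, ‖γ j‖ ≤ κ * Real.sqrt (2 * (j : ℝ) + 1) / ρ ^ j)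
    (ν : ℝ) (hν : ∀ t₁ ∈ Set.Icc (0:ℝ) h, ∀ t₂ ∈ Set.Icc (0:ℝ) h, ‖Φ (t₁, t₂)‖ ≤ ν) :
    ∀ c ∈ Set.Icc (0:ℝ) 1,
      ‖σ (c * h) - y (c * h)‖ ≤
        c * h * ν * κ * ∑' j : ℕ, (2 * ((s : ℝ) + j) + 1) / ρ ^ (s + j) :=
  shbvm_uniform_error_bound_general f y₀ h hh s F Φ σ hσ0 y hy γ hFid hFderiv hσeq hunif κ ρ hρ
    hγbound ν hν
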